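/- Let the setting be type A_N or type B_N, let (i_t,k_t), 1 ≤ t ≤ T, be a snake, and let (p_1,…,p_T) ∈ P̄_{(i_t,k_t)}. If (p_1,…,p_T) ≠ (p⁺_{i_1,k_1},…,p⁺_{i_T,k_T}) then ∏_{t=1}^T m(p_t) is not dominant, and if (p_1,…,p_T) ≠ (p⁻_{i_1,k_1},…,p⁻_{i_T,k_T}) then ∏_{t=1}^T m(p_t) is not anti-dominant. -/

import Mathlib

namespace Paper

/-- The ambient setting: type `A N` (with `N ≥ 1`) or type `B N ε`
(with `N ≥ 2` and `0 < ε < 1/2`). -/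
inductive Setting where
  | A (N : ℕ)
  | B (N : ℕ) (ε : ℝ)

namespace Setting

/-- The rank `N`. -/
def N : Setting → ℕ
  | A n => n
  | B n _ => n

/-- Validity of the parameters of the setting. -/
def valid : Setting → Prop
  | A n => 1 ≤ n
  | B n ε => 2 ≤ n ∧ 0 < ε ∧ ε < 1 / 2

end Setting

/-- The numbers `r_i` : in type A all equal `1`; in type B, `r_N = 1` and `r_i = 2` for `i < N`. -/
def rr : Setting → ℕ → ℕ
  | .A _, _ => 1
  | .B n _, j => if j = n then 1 else 2

/-- The set `X` in type `A_N`. -/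
def XA (n : ℕ) : Set (ℕ × ℤ) :=
  {ik | 1 ≤ ik.1 ∧ ik.1 ≤ n ∧ ((ik.1 : ℤ) - ik.2) % 2 = 1}

/-- The set `X` in type `B_N`. -/
def XB (n : ℕ) : Set (ℕ × ℤ) :=
  {ik | (ik.1 = n ∧ ik.2 % 2 = 1) ∨ (1 ≤ ik.1 ∧ ik.1 < n ∧ ik.2 % 2 = 0)}

/-- The set `X ⊆ I × ℤ`. -/
def X : Setting → Set (ℕ × ℤ)
  | .A n => XA n
  | .B n _ => XB n

/-- The set `W = {(i,k) : (i, k - r_i) ∈ X}`. -/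
def W (S : Setting) : Set (ℕ × ℤ) :=
  {ik | (ik.1, ik.2 - (rr S ik.1 : ℤ)) ∈ X S}

/-- The `r`-th point of a path (a finite list of points of the plane). -/
def pt (p : List (ℝ × ℝ)) (r : ℕ) : ℝ × ℝ := p.getD r (0, 0)

/-- The set of paths `𝒫_{i,k}` in type `A_N`. -/
def pathsA (n : ℕ) (i : ℕ) (k : ℤ) : Set (List (ℝ × ℝ)) :=
  {p | p.length = n + 2 ∧
    (∀ r, r < n + 2 → (pt p r).1 = (r : ℝ)) ∧
    (pt p 0).2 = (i : ℝ) + (k : ℝ) ∧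
    (pt p (n + 1)).2 = (n : ℝ) + 1 - (i : ℝ) + (k : ℝ) ∧
    (∀ r, r ≤ n → (pt p (r + 1)).2 - (pt p r).2 = 1 ∨ (pt p (r + 1)).2 - (pt p r).2 = -1)}

/-- The set of paths `𝒫_{N,ℓ}` in type `B_N`. -/
def pathsBspin (n : ℕ) (ε : ℝ) (l : ℤ) : Set (List (ℝ × ℝ)) :=
  {p | p.length = n + 1 ∧
    (if l % 4 = 3 then ∀ r, r < n → (pt p r).1 = 2 * (r : ℝ)
     else ∀ r, r < n → (pt p r).1 = 4 * (n : ℝ) - 2 - 2 * (r : ℝ)) ∧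
    (pt p n).1 = 2 * (n : ℝ) - 1 ∧
    (pt p 0).2 = (l : ℝ) + 2 * (n : ℝ) - 1 ∧
    (∀ r, r + 2 ≤ n → (pt p (r + 1)).2 - (pt p r).2 = 2 ∨ (pt p (r + 1)).2 - (pt p r).2 = -2) ∧
    ((pt p n).2 - (pt p (n - 1)).2 = 1 + ε ∨ (pt p n).2 - (pt p (n - 1)).2 = -(1 + ε))}

/-- The set of paths `𝒫_{i,k}` in type `B_N`. -/
def pathsB (n : ℕ) (ε : ℝ) (i : ℕ) (k : ℤ) : Set (List (ℝ × ℝ)) :=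
  if i = n then pathsBspin n ε k
  else {p | ∃ a b : List (ℝ × ℝ),
    a ∈ pathsBspin n ε (k - (2 * (n : ℤ) - 2 * (i : ℤ) - 1)) ∧
    b ∈ pathsBspin n ε (k + (2 * (n : ℤ) - 2 * (i : ℤ) - 1)) ∧
    p = a ++ b.reverse ∧
    (pt a n).1 = (pt b n).1 ∧ 0 < (pt a n).2 - (pt b n).2}

/-- The set of paths `𝒫_{i,k}`. -/
def P : Setting → ℕ → ℤ → Set (List (ℝ × ℝ))
  | .A n => pathsA n
  | .B n ε => pathsB n ε

/-- The map `ι : X → ℤ × ℤ` of type `B_N`. -/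
def iotaB (n : ℕ) (ik : ℕ × ℤ) : ℤ × ℤ :=
  if ik.1 = n then (2 * (n : ℤ) - 1, ik.2)
  else if (2 * (n : ℤ) + ik.2 - 2 * (ik.1 : ℤ)) % 4 = 2 then (2 * (ik.1 : ℤ), ik.2)
  else (4 * (n : ℤ) - 2 - 2 * (ik.1 : ℤ), ik.2)

/-- The corners of a path: `Cp S p true` is the set `C_{p,+}` of upper corners, and
`Cp S p false` is the set `C_{p,-}` of lower corners. -/
def Cp (S : Setting) (p : List (ℝ × ℝ)) (up : Bool) : Set (ℕ × ℤ) :=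
  match S with
  | .A n =>
    {jl | 1 ≤ jl.1 ∧ jl.1 ≤ n ∧
      pt p jl.1 = ((jl.1 : ℝ), (jl.2 : ℝ)) ∧
      (pt p (jl.1 - 1)).2 = (jl.2 : ℝ) + (if up then 1 else -1) ∧
      (pt p (jl.1 + 1)).2 = (jl.2 : ℝ) + (if up then 1 else -1)}
  | .B n ε =>
    {jl | jl ∈ XB n ∧
      ((∃ r : ℕ, 1 ≤ r ∧ r + 1 < p.length ∧
          pt p r = (((iotaB n jl).1 : ℝ), ((iotaB n jl).2 : ℝ)) ∧
          (iotaB n jl).1 ≠ 0 ∧ (iotaB n jl).1 ≠ 2 * (n : ℤ) - 1 ∧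
          (iotaB n jl).1 ≠ 4 * (n : ℤ) - 2 ∧
          (if up then (pt p r).2 < (pt p (r - 1)).2 ∧ (pt p r).2 < (pt p (r + 1)).2
           else (pt p (r - 1)).2 < (pt p r).2 ∧ (pt p (r + 1)).2 < (pt p r).2))
       ∨ (jl.1 = n ∧
          (if up then (2 * (n : ℝ) - 1, (jl.2 : ℝ) - ε) ∈ p ∧ (2 * (n : ℝ) - 1, (jl.2 : ℝ) + ε) ∉ p
           else (2 * (n : ℝ) - 1, (jl.2 : ℝ) + ε) ∈ p ∧ (2 * (n : ℝ) - 1, (jl.2 : ℝ) - ε) ∉ p)))}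

/-- `p'` is obtained from `p` by replacing the point `q` by the point `q'`. -/
def Replace1 (p p' : List (ℝ × ℝ)) (q q' : ℝ × ℝ) : Prop :=
  ∃ r : ℕ, r < p.length ∧ pt p r = q ∧ p'.length = p.length ∧ pt p' r = q' ∧
    ∀ s, s < p.length → s ≠ r → pt p' s = pt p s

/-- `p'` is obtained from `p` by replacing the point `q1` by `q1'` and the point `q2` by `q2'`. -/
def Replace2 (p p' : List (ℝ × ℝ)) (q1 q1' q2 q2' : ℝ × ℝ) : Prop :=
  ∃ r s : ℕ, r < p.length ∧ s < p.length ∧ r ≠ s ∧ pt p r = q1 ∧ pt p s = q2 ∧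
    p'.length = p.length ∧ pt p' r = q1' ∧ pt p' s = q2' ∧
    ∀ u, u < p.length → u ≠ r → u ≠ s → pt p' u = pt p u

/-- The path `p` can be lowered at `(j, l)`: `(j, l - r_j) ∈ C_{p,+}` and
`(j, l + r_j) ∉ C_{p,+}`. -/
def CanLower (S : Setting) (p : List (ℝ × ℝ)) (j : ℕ) (l : ℤ) : Prop :=
  (j, l - (rr S j : ℤ)) ∈ Cp S p true ∧ (j, l + (rr S j : ℤ)) ∉ Cp S p true

/-- `p'` is the result of the lowering move at `(j,l)` applied to the path `p ∈ 𝒫_{i,k}`;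
written `p' = p 𝒜_{j,l}⁻¹`. -/
def LoweredTo (S : Setting) (i : ℕ) (k : ℤ) (j : ℕ) (l : ℤ)
    (p p' : List (ℝ × ℝ)) : Prop :=
  p ∈ P S i k ∧ p' ∈ P S i k ∧ CanLower S p j l ∧
  (match S with
   | .A _ => Replace1 p p' ((j : ℝ), (l : ℝ) - 1) ((j : ℝ), (l : ℝ) + 1)
   | .B n ε =>
     if j = n then
       Replace1 p p' (2 * (n : ℝ) - 1, (l : ℝ) - 1 - ε) (2 * (n : ℝ) - 1, (l : ℝ) + 1 + ε)
     else if j = n - 1 then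
       Replace2 p p'
         (((iotaB n (j, l - 2)).1 : ℝ), (l : ℝ) - 2) (((iotaB n (j, l - 2)).1 : ℝ), (l : ℝ) + 2)
         (2 * (n : ℝ) - 1, (l : ℝ) - 1 + ε) (2 * (n : ℝ) - 1, (l : ℝ) + 1 - ε)
     else
       Replace1 p p'
         (((iotaB n (j, l - 2)).1 : ℝ), (l : ℝ) - 2) (((iotaB n (j, l - 2)).1 : ℝ), (l : ℝ) + 2))

/-- The path `p` can be raised at `(j,l)`: it is of the form `p' 𝒜_{j,l}⁻¹`. -/
def CanRaise (S : Setting) (i : ℕ) (k : ℤ) (p : List (ℝ × ℝ)) (j : ℕ) (l : ℤ) : Prop :=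
  ∃ p', LoweredTo S i k j l p' p

/-- The monomial group `ℳ`, realised as exponent functions: the free abelian group on the
symbols `Y_{i,k}`, `(i,k) ∈ X`, is identified with finitely supported functions `(ℕ × ℤ) → ℤ`,
written additively. -/
def Y (x : ℕ × ℤ) : (ℕ × ℤ) → ℤ := fun z => if z = x then 1 else 0

noncomputable def ind (s : Prop) : ℤ := @ite ℤ s (Classical.propDecidable s) 1 0

/-- The monomial `m(p)` of a path: `∏ Y_{j,l}` over upper corners times `∏ Y_{j,l}⁻¹`
over lower corners. -/
noncomputable def mon (S : Setting) (p : List (ℝ × ℝ)) : (ℕ × ℤ) → ℤ :=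
  fun x => ind (x ∈ Cp S p true) - ind (x ∈ Cp S p false)

/-- The monomials `A_{j,l}`, with the conventions `Y_{0,·} = Y_{N+1,·} = 1`. -/
def Amon (S : Setting) (j : ℕ) (l : ℤ) : (ℕ × ℤ) → ℤ :=
  match S with
  | .A n =>
      Y (j, l + 1) + Y (j, l - 1) - (if j = 1 then 0 else Y (j - 1, l))
        - (if j = n then 0 else Y (j + 1, l))
  | .B n _ =>
      if j = n then Y (n, l + 1) + Y (n, l - 1) - Y (n - 1, l)
      else if j = n - 1 then
        Y (n - 1, l + 2) + Y (n - 1, l - 2) - (if j = 1 then 0 else Y (n - 2, l))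
          - Y (n, l + 1) - Y (n, l - 1)
      else
        Y (j, l + 2) + Y (j, l - 2) - (if j = 1 then 0 else Y (j - 1, l)) - Y (j + 1, l)

/-- A monomial is dominant iff all its exponents are nonnegative. -/
def Dominant (m : (ℕ × ℤ) → ℤ) : Prop := ∀ x, 0 ≤ m x

/-- A monomial is anti-dominant iff all its exponents are nonpositive. -/
def AntiDominant (m : (ℕ × ℤ) → ℤ) : Prop := ∀ x, m x ≤ 0

/-- `(i',k')` is in snake position with respect to `(i,k)`. -/
def SnakePos : Setting → ℕ × ℤ → ℕ × ℤ → Prop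
  | .A _, ik, ik' => |(ik'.1 : ℤ) - (ik.1 : ℤ)| + 2 ≤ ik'.2 - ik.2
  | .B n _, ik, ik' =>
      if ik.1 = n ∧ ik'.1 = n then
        2 ≤ ik'.2 - ik.2 ∧ (ik'.2 - ik.2) % 4 = 2
      else if ik.1 = n ∨ ik'.1 = n then
        2 * |(ik'.1 : ℤ) - (ik.1 : ℤ)| + 3 ≤ ik'.2 - ik.2 ∧
          (ik'.2 - ik.2) % 4 = (2 * |(ik'.1 : ℤ) - (ik.1 : ℤ)| - 1) % 4
      else
        2 * |(ik'.1 : ℤ) - (ik.1 : ℤ)| + 4 ≤ ik'.2 - ik.2 ∧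
          (ik'.2 - ik.2) % 4 = (2 * |(ik'.1 : ℤ) - (ik.1 : ℤ)|) % 4

/-- A snake: a sequence of points of `X`, each in snake position w.r.t. the previous one. -/
def IsSnake (S : Setting) {T : ℕ} (w : Fin T → ℕ × ℤ) : Prop :=
  (∀ t, w t ∈ X S) ∧
  ∀ (t : Fin T) (h : (t : ℕ) + 1 < T), SnakePos S (w t) (w ⟨(t : ℕ) + 1, h⟩)

/-- `p` is strictly above `p'`. -/
def StrictlyAbove (p p' : List (ℝ × ℝ)) : Prop :=
  ∀ a ∈ p, ∀ b ∈ p', a.1 = b.1 → a.2 < b.2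

/-- A tuple of paths is non-overlapping. -/
def NonOverlapping {T : ℕ} (ps : Fin T → List (ℝ × ℝ)) : Prop :=
  ∀ s t : Fin T, s < t → StrictlyAbove (ps s) (ps t)

/-- The set `𝒫̄` of non-overlapping tuples of paths attached to a snake. -/
def PBar (S : Setting) {T : ℕ} (w : Fin T → ℕ × ℤ) : Set (Fin T → List (ℝ × ℝ)) :=
  {ps | (∀ t, ps t ∈ P S (w t).1 (w t).2) ∧ NonOverlapping ps}

/-- The product `∏_t m(p_t)` of the monomials of a tuple of paths. -/
noncomputable def tmon (S : Setting) {T : ℕ} (ps : Fin T → List (ℝ × ℝ)) : (ℕ × ℤ) → ℤ :=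
  ∑ t, mon S (ps t)

/-- Lowering move at `jl` on a tuple of paths: one component is lowered, the others
are unchanged. -/
def TLoweredTo (S : Setting) {T : ℕ} (w : Fin T → ℕ × ℤ) (jl : ℕ × ℤ)
    (ps ps' : Fin T → List (ℝ × ℝ)) : Prop :=
  ∃ t, LoweredTo S (w t).1 (w t).2 jl.1 jl.2 (ps t) (ps' t) ∧ ∀ s, s ≠ t → ps' s = ps s

/-- Sequences of raising/lowering moves on a single path; the list records, for each move,
whether it was a lowering move (`true`) or a raising move (`false`), and its site. -/
inductive MoveSeq (S : Setting) (i : ℕ) (k : ℤ) :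
    List (ℝ × ℝ) → List (ℝ × ℝ) → List (Bool × (ℕ × ℤ)) → Prop where
  | nil (p : List (ℝ × ℝ)) : MoveSeq S i k p p []
  | lower {p q r : List (ℝ × ℝ)} {jl : ℕ × ℤ} {ms : List (Bool × (ℕ × ℤ))} :
      jl ∈ W S → LoweredTo S i k jl.1 jl.2 p q → MoveSeq S i k q r ms →
      MoveSeq S i k p r ((true, jl) :: ms)
  | raise {p q r : List (ℝ × ℝ)} {jl : ℕ × ℤ} {ms : List (Bool × (ℕ × ℤ))} :
      jl ∈ W S → LoweredTo S i k jl.1 jl.2 q p → MoveSeq S i k q r ms →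
      MoveSeq S i k p r ((false, jl) :: ms)

/-- Sequences of raising/lowering moves on tuples of paths, all of whose intermediate
tuples are non-overlapping. -/
inductive TMoveSeq (S : Setting) {T : ℕ} (w : Fin T → ℕ × ℤ) :
    (Fin T → List (ℝ × ℝ)) → (Fin T → List (ℝ × ℝ)) → List (Bool × (ℕ × ℤ)) → Prop where
  | nil (ps : Fin T → List (ℝ × ℝ)) : TMoveSeq S w ps ps []
  | lower {ps qs rs : Fin T → List (ℝ × ℝ)} {jl : ℕ × ℤ} {ms : List (Bool × (ℕ × ℤ))} :
      jl ∈ W S → TLoweredTo S w jl ps qs → NonOverlapping qs →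
      TMoveSeq S w qs rs ms → TMoveSeq S w ps rs ((true, jl) :: ms)
  | raise {ps qs rs : Fin T → List (ℝ × ℝ)} {jl : ℕ × ℤ} {ms : List (Bool × (ℕ × ℤ))} :
      jl ∈ W S → TLoweredTo S w jl qs ps → NonOverlapping qs →
      TMoveSeq S w qs rs ms → TMoveSeq S w ps rs ((false, jl) :: ms)

/-- Sequences of lowering moves on tuples of paths, all of whose intermediate tuples
are non-overlapping; the list records the sites, in order. -/
inductive TLowerSeq (S : Setting) {T : ℕ} (w : Fin T → ℕ × ℤ) :
    (Fin T → List (ℝ × ℝ)) → (Fin T → List (ℝ × ℝ)) → List (ℕ × ℤ) → Prop where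
  | nil (ps : Fin T → List (ℝ × ℝ)) : TLowerSeq S w ps ps []
  | cons {ps qs rs : Fin T → List (ℝ × ℝ)} {jl : ℕ × ℤ} {ms : List (ℕ × ℤ)} :
      jl ∈ W S → TLoweredTo S w jl ps qs → NonOverlapping qs →
      TLowerSeq S w qs rs ms → TLowerSeq S w ps rs (jl :: ms)

/-- Weak order on paths with the same x-coordinates: `p` is weakly above `p'`. -/
def WeaklyAbove (p p' : List (ℝ × ℝ)) : Prop :=
  p.length = p'.length ∧ ∀ r, r < p.length → (pt p r).2 ≤ (pt p' r).2

/-- `p` is weakly below `p'`. -/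
def WeaklyBelow (p p' : List (ℝ × ℝ)) : Prop :=
  p.length = p'.length ∧ ∀ r, r < p.length → (pt p' r).2 ≤ (pt p r).2

/-- The path `top(p, p')`. -/
def topPath (p p' : List (ℝ × ℝ)) : List (ℝ × ℝ) :=
  List.zipWith (fun a b => (a.1, min a.2 b.2)) p p'

/-- The distinguished point contained in the highest path `p⁺_{i,k}`. -/
def highPoint : Setting → ℕ → ℤ → ℝ × ℝ
  | .A _, i, k => ((i : ℝ), (k : ℝ))
  | .B n ε, i, k =>
      if i = n then (2 * (n : ℝ) - 1, (k : ℝ) - ε)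
      else (((iotaB n (i, k)).1 : ℝ), ((iotaB n (i, k)).2 : ℝ))

/-- The distinguished point contained in the lowest path `p⁻_{i,k}`. -/
def lowPoint : Setting → ℕ → ℤ → ℝ × ℝ
  | .A n, i, k => ((n : ℝ) + 1 - (i : ℝ), (k : ℝ) + (n : ℝ) + 1)
  | .B n ε, i, k =>
      if i = n then (2 * (n : ℝ) - 1, (k : ℝ) + 4 * (n : ℝ) - 2 + ε)
      else (((iotaB n (i, k + 4 * (n : ℤ) - 2)).1 : ℝ),
            ((iotaB n (i, k + 4 * (n : ℤ) - 2)).2 : ℝ))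

/-- The highest path `p⁺_{i,k}` : the path of `𝒫_{i,k}` with no lower corners. -/
noncomputable def highestPath (S : Setting) (i : ℕ) (k : ℤ) : List (ℝ × ℝ) :=
  Classical.epsilon fun p => p ∈ P S i k ∧ Cp S p false = ∅

/-- The lowest path `p⁻_{i,k}` : the path of `𝒫_{i,k}` with no upper corners. -/
noncomputable def lowestPath (S : Setting) (i : ℕ) (k : ℤ) : List (ℝ × ℝ) :=
  Classical.epsilon fun p => p ∈ P S i k ∧ Cp S p true = ∅


/-!
If `∏ m(p_t)` is dominant, each lower corner of some `p_t` is cancelled by an upper corner of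
some `p_s` at the same site. Away from the column `x = 2N - 1` (always, in type `A`) a corner is
a point of the path at which it has a local extremum; non-overlapping forces `s = t`, and one
point cannot be a local maximum and minimum at once. So no path has a local maximum of `y`
there. In type `B` a lower corner `(N, c)` of `p_t` would need a path `p_s` through
`(2N - 1, c - ε)`; since `p_s` has no local maximum, the half of `p_s` ending there goes straight
down, which pins `c` to the level of `p_s`. Levels increase along the snake, while every point
`(2N - 1, y)` of `p_t` has `y ≥ level(p_t) - ε`: a contradiction. So no `p_t` has lower corners,
and in `𝒫_{i,k}` the only such path is `p⁺_{i,k}`, made of valleys determined by their end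
points. The anti-dominant case is the same argument after `y ↦ -y`, which is why everything is
stated for a kind of corner `up`.
-/

lemma pt_eq_getElem {p : List (ℝ × ℝ)} {r : ℕ} (h : r < p.length) : pt p r = p[r] :=
  List.getD_eq_getElem _ _ h

lemma pt_mem {p : List (ℝ × ℝ)} {r : ℕ} (h : r < p.length) : pt p r ∈ p := by
  rw [pt_eq_getElem h]; exact List.getElem_mem h

lemma exists_pt_eq_of_mem {p : List (ℝ × ℝ)} {x : ℝ × ℝ} (h : x ∈ p) :
    ∃ r < p.length, pt p r = x := by
  obtain ⟨r, hr, rfl⟩ := List.getElem_of_mem h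
  exact ⟨r, hr, pt_eq_getElem hr⟩

lemma ext_pt {p q : List (ℝ × ℝ)} (hl : p.length = q.length)
    (h : ∀ r < p.length, pt p r = pt q r) : p = q :=
  List.ext_getElem hl fun r h₁ h₂ => by rw [← pt_eq_getElem h₁, ← pt_eq_getElem h₂, h r h₁]

lemma int_add_ne_int_sub {ε : ℝ} (hε : 0 < ε ∧ ε < 1 / 2) {c c' : ℤ} :
    (c : ℝ) + ε ≠ c' - ε := by
  intro h
  have h₁ : (0 : ℝ) < ((c' - c : ℤ) : ℝ) := by push_cast; linarith
  have h₂ : ((c' - c : ℤ) : ℝ) < 1 := by push_cast; linarith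
  norm_cast at h₁ h₂; omega

lemma int_le_of_le_add {ε : ℝ} (hε : ε < 1 / 2) {c c' : ℤ} (h : (c : ℝ) ≤ c' + 2 * ε) :
    c ≤ c' := by
  have : ((c - c' : ℤ) : ℝ) < 1 := by push_cast; linarith
  norm_cast at this; omega

/-! ### Valleys -/

def NoPeak {α : Type*} [LinearOrder α] (y : ℕ → α) (M : ℕ) : Prop :=
  ∀ r, 0 < r → r < M → ¬ (y (r - 1) < y r ∧ y (r + 1) < y r)

section NoPeak
variable {α : Type*} [LinearOrder α] {y : ℕ → α} {M : ℕ}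

lemma NoPeak.mono (hy : NoPeak y M) {M' : ℕ} (h : M' ≤ M) : NoPeak y M' :=
  fun r hr₀ hr => hy r hr₀ (by omega)

lemma NoPeak.lt_succ_of_le (hy : NoPeak y M) (hstep : ∀ r < M, y (r + 1) ≠ y r)
    {j j' : ℕ} (hjj' : j ≤ j') (hj' : j' < M) (hup : y j < y (j + 1)) :
    y j' < y (j' + 1) := by
  induction j', hjj' using Nat.le_induction with
  | base => exact hup
  | succ j' _ ih =>
    have h := ih (by omega)
    refine (lt_or_gt_of_ne (hstep (j' + 1) hj').symm).resolve_right fun hdown => ?_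
    exact hy (j' + 1) (by omega) hj' ⟨h, hdown⟩

lemma NoPeak.succ_lt (hy : NoPeak y M) (hstep : ∀ r < M, y (r + 1) ≠ y r)
    (hlast : y M < y (M - 1)) {r : ℕ} (hr : r < M) : y (r + 1) < y r := by
  refine (lt_or_gt_of_ne (hstep r hr)).resolve_right fun hup => ?_
  have := hy.lt_succ_of_le hstep (j' := M - 1) (by omega) (by omega) hup
  rw [Nat.sub_add_cancel (by omega)] at this
  exact lt_asymm this hlast

end NoPeak

section Steps
variable {y : ℕ → ℝ} {δ : ℝ} {M : ℕ}

lemma eq_sub_of_forall_succ_eq (hd : ∀ j < M, y (j + 1) = y j - δ) {b : ℕ} (hb : b ≤ M) :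
    y b = y 0 - δ * b := by
  induction b with
  | zero => simp
  | succ b ih => rw [hd b (by omega), ih (by omega)]; push_cast; ring

lemma abs_sub_le_of_steps (hδ : 0 ≤ δ) (hstep : ∀ r < M, y (r + 1) = y r + δ ∨ y (r + 1) = y r - δ)
    {a b : ℕ} (hab : a ≤ b) (hb : b ≤ M) : |y b - y a| ≤ δ * (b - a) := by
  induction b, hab using Nat.le_induction with
  | base => simp
  | succ b _ ih =>
    have h := abs_le.mp (ih (by omega))
    push_cast
    rw [abs_le]
    rcases hstep b (by omega) with h' | h' <;> rw [h'] <;> constructor <;> nlinarith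

lemma NoPeak.eq_max (hδ : 0 < δ) (hstep : ∀ r < M, y (r + 1) = y r + δ ∨ y (r + 1) = y r - δ)
    (hy : NoPeak y M) {r : ℕ} (hr : r ≤ M) :
    y r = max (y 0 - δ * r) (y M - δ * (M - r)) := by
  have hne : ∀ r < M, y (r + 1) ≠ y r := fun r hr => by
    rcases hstep r hr with h | h <;> rw [h] <;> linarith
  have h₀ := abs_le.mp (abs_sub_le_of_steps hδ.le hstep (Nat.zero_le r) hr)
  have hM := abs_le.mp (abs_sub_le_of_steps hδ.le hstep hr le_rfl)
  push_cast at h₀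
  by_cases hall : ∀ j < r, y (j + 1) = y j - δ
  · have := eq_sub_of_forall_succ_eq hall le_rfl
    rw [this, max_eq_left (by linarith)]
  · push Not at hall
    obtain ⟨j, hjr, hj⟩ := hall
    have hup : ∀ j', r ≤ j' → j' < M → y (j' + 1) = y j' + δ := fun j' hj₁ hj₂ =>
      (hstep j' hj₂).resolve_right fun h => by
        have := hy.lt_succ_of_le hne (j := j) (j' := j') (by omega) hj₂
          (by rcases hstep j (by omega) with h' | h' <;> [linarith; exact absurd h' hj])
        linarith
    have : y M = y r + δ * (M - r) := by
      have key : ∀ b, r ≤ b → b ≤ M → y b = y r + δ * (b - r) := fun b hb₁ hb₂ => by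
        induction b, hb₁ using Nat.le_induction with
        | base => simp
        | succ b hb ih => rw [hup b hb (by omega), ih (by omega)]; push_cast; ring
      exact key M hr le_rfl
    rw [max_eq_right (by linarith)]; linarith

end Steps

/-! ### Corners of tuples -/

lemma ind_eq_one {s : Prop} (h : s) : ind s = 1 := by simp [ind, h]

lemma ind_eq_zero {s : Prop} (h : ¬ s) : ind s = 0 := by simp [ind, h]

lemma ind_nonneg (s : Prop) : 0 ≤ ind s := by
  by_cases h : s <;> simp [ind_eq_one, ind_eq_zero, h]

def CornersCancel (S : Setting) {T : ℕ} (ps : Fin T → List (ℝ × ℝ)) (up : Bool) : Prop :=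
  ∀ x t, x ∈ Cp S (ps t) up → ∃ s, x ∈ Cp S (ps s) (!up)

section Cancel
variable {S : Setting} {T : ℕ} {ps : Fin T → List (ℝ × ℝ)}

lemma tmon_apply (x : ℕ × ℤ) :
    tmon S ps x = ∑ t, (ind (x ∈ Cp S (ps t) true) - ind (x ∈ Cp S (ps t) false)) := by
  simp [tmon, mon, Finset.sum_apply]

lemma cornersCancel_false_of_dominant (hD : Dominant (tmon S ps)) : CornersCancel S ps false := by
  intro x t ht
  by_contra! h
  simp only [Bool.not_false] at h
  have hx : tmon S ps x = -∑ s, ind (x ∈ Cp S (ps s) false) := by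
    simp [tmon_apply, ind_eq_zero (h _)]
  have := Finset.single_le_sum (fun s _ => ind_nonneg (x ∈ Cp S (ps s) false))
    (Finset.mem_univ t)
  rw [ind_eq_one ht] at this
  linarith [hD x]

lemma cornersCancel_true_of_antiDominant (hD : AntiDominant (tmon S ps)) :
    CornersCancel S ps true := by
  intro x t ht
  by_contra! h
  simp only [Bool.not_true] at h
  have hx : tmon S ps x = ∑ s, ind (x ∈ Cp S (ps s) true) := by
    simp [tmon_apply, ind_eq_zero (h _)]
  have := Finset.single_le_sum (fun s _ => ind_nonneg (x ∈ Cp S (ps s) true))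
    (Finset.mem_univ t)
  rw [ind_eq_one ht] at this
  linarith [hD x]

end Cancel

section NonOverlapping
variable {T : ℕ} {ps : Fin T → List (ℝ × ℝ)}

lemma NonOverlapping.le_of_mem (h : NonOverlapping ps) {s t : Fin T} {u v v' : ℝ}
    (hs : (u, v) ∈ ps s) (ht : (u, v') ∈ ps t) (hv : v ≤ v') : s ≤ t :=
  le_of_not_gt fun hts => (h t s hts _ ht _ hs rfl).not_ge hv

lemma NonOverlapping.eq_of_mem (h : NonOverlapping ps) {s t : Fin T} {q : ℝ × ℝ}
    (hs : q ∈ ps s) (ht : q ∈ ps t) : s = t :=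
  le_antisymm (h.le_of_mem hs ht le_rfl) (h.le_of_mem ht hs le_rfl)

end NonOverlapping

lemma eq_epsilon_of_unique {α : Type*} [Nonempty α] {p : α → Prop} {a : α} (ha : p a)
    (h : ∀ b, p b → b = a) : a = Classical.epsilon p :=
  (h _ (Classical.epsilon_spec ⟨a, ha⟩)).symm

/-- The sign making corners of kind `up` local maxima of `height up`: lower corners are local
maxima of `y`, upper corners local minima. -/
def signed (up : Bool) (v : ℝ) : ℝ := if up then -v else v

def height (up : Bool) (p : List (ℝ × ℝ)) (r : ℕ) : ℝ := signed up (pt p r).2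

lemma height_eq_signed_iff {up : Bool} {p : List (ℝ × ℝ)} {r : ℕ} {v : ℝ} :
    height up p r = signed up v ↔ (pt p r).2 = v := by
  cases up <;> simp [height, signed]

lemma height_injective (up : Bool) {p q : List (ℝ × ℝ)} {r r' : ℕ}
    (h : height up p r = height up q r') : (pt p r).2 = (pt q r').2 := by
  cases up <;> simpa [height, signed] using h

/-! ### Type `A` -/

section TypeA
variable {n i : ℕ} {k : ℤ} {p q : List (ℝ × ℝ)}

lemma pathsA_height_succ (hp : p ∈ pathsA n i k) (up : Bool) :
    ∀ r < n + 1, height up p (r + 1) = height up p r + 1 ∨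
      height up p (r + 1) = height up p r - 1 := by
  intro r hr
  rcases hp.2.2.2.2 r (by omega) with h | h <;> cases up <;> simp only [height, signed] <;>
    first | (left; simp; linarith) | (right; simp; linarith)

lemma pathsA_exists_int (hp : p ∈ pathsA n i k) {r : ℕ} (hr : r ≤ n + 1) :
    ∃ m : ℤ, (pt p r).2 = m := by
  induction r with
  | zero => exact ⟨i + k, by rw [hp.2.2.1]; push_cast; ring⟩
  | succ r ih =>
    obtain ⟨m, hm⟩ := ih (by omega)
    rcases hp.2.2.2.2 r (by omega) with h | h
    · exact ⟨m + 1, by push_cast; linarith⟩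
    · exact ⟨m - 1, by push_cast; linarith⟩

lemma mem_of_mem_Cp_A {x : ℕ × ℤ} {up : Bool} (h : x ∈ Cp (.A n) p up) :
    ((x.1 : ℝ), (x.2 : ℝ)) ∈ p := by
  obtain ⟨h₁, -, h₃, -⟩ := h
  rw [← h₃]
  refine pt_mem (not_le.mp fun hl => ?_)
  have : ((0 : ℝ), (0 : ℝ)) = ((x.1 : ℝ), (x.2 : ℝ)) := by
    rw [← h₃]; exact (List.getD_eq_default p _ hl).symm
  have : (x.1 : ℝ) = 0 := (congrArg Prod.fst this).symm
  norm_cast at this; omega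

lemma noPeak_of_Cp_A_eq_empty (hp : p ∈ pathsA n i k) {up : Bool} (hC : Cp (.A n) p up = ∅) :
    NoPeak (height up p) (n + 1) := by
  rintro r hr₀ hr ⟨hl, hr'⟩
  obtain ⟨m, hm⟩ := pathsA_exists_int hp (r := r) (by omega)
  have hl' := pathsA_height_succ hp up (r - 1) (by omega)
  have hr'' := pathsA_height_succ hp up r hr
  rw [Nat.sub_add_cancel hr₀] at hl'
  have hcorner : (r, m) ∈ Cp (.A n) p up := by
    refine ⟨hr₀, by omega, Prod.ext (hp.2.1 r (by omega)) hm, ?_⟩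
    cases up <;> simp only [height, signed, Bool.false_eq_true, if_false, if_true] at * <;>
      rcases hl' with h | h <;> rcases hr'' with h' | h' <;> constructor <;> linarith
  simp [hC] at hcorner

lemma eq_of_Cp_A_eq_empty (hp : p ∈ pathsA n i k) (hq : q ∈ pathsA n i k) {up : Bool}
    (hCp : Cp (.A n) p up = ∅) (hCq : Cp (.A n) q up = ∅) : p = q := by
  have hend : ∀ r, r = 0 ∨ r = n + 1 → height up p r = height up q r := by
    rintro r (rfl | rfl) <;> simp only [height, hp.2.2.1, hq.2.2.1, hp.2.2.2.1, hq.2.2.2.1]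
  refine ext_pt (by rw [hp.1, hq.1]) fun r hr => ?_
  rw [hp.1] at hr
  refine Prod.ext ?_ (height_injective up ?_)
  · rw [hp.2.1 r hr, hq.2.1 r hr]
  · rw [(noPeak_of_Cp_A_eq_empty hp hCp).eq_max one_pos (pathsA_height_succ hp up) (by omega),
      (noPeak_of_Cp_A_eq_empty hq hCq).eq_max one_pos (pathsA_height_succ hq up) (by omega),
      hend 0 (by simp), hend (n + 1) (by simp)]

lemma Cp_A_eq_empty_of_cornersCancel {T : ℕ} {ps : Fin T → List (ℝ × ℝ)}
    (hps : NonOverlapping ps) {up : Bool} (hC : CornersCancel (.A n) ps up) (t : Fin T) :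
    Cp (.A n) (ps t) up = ∅ := by
  refine Set.eq_empty_of_forall_notMem fun x hx => ?_
  obtain ⟨s, hs⟩ := hC x t hx
  obtain rfl := hps.eq_of_mem (mem_of_mem_Cp_A hs) (mem_of_mem_Cp_A hx)
  have h₁ := hx.2.2.2.1
  have h₂ := hs.2.2.2.1
  cases up <;> simp only [Bool.not_false, Bool.not_true] at h₂ <;> simp at h₁ h₂ <;> linarith

end TypeA

/-! ### Type `B`: single paths -/

/-- The end point of the spin path of `𝒫_{N,l}` going down in `height up` at every step is
`(2N - 1, bottom up N l - signed up ε)`. -/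
def bottom (up : Bool) (n : ℕ) (l : ℤ) : ℤ := if up then l + 4 * n - 2 else l

section SpinPath
variable {n : ℕ} {ε : ℝ} {l : ℤ} {q q' : List (ℝ × ℝ)}

lemma spin_length (hq : q ∈ pathsBspin n ε l) : q.length = n + 1 := hq.1

lemma spin_fst_last (hq : q ∈ pathsBspin n ε l) : (pt q n).1 = 2 * n - 1 := hq.2.2.1

lemma spin_fst (hq : q ∈ pathsBspin n ε l) {r : ℕ} (hr : r < n) :
    (pt q r).1 = ((if l % 4 = 3 then 2 * r else 4 * n - 2 - 2 * r : ℤ) : ℝ) := by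
  have h := hq.2.1
  split_ifs at h ⊢ <;> push_cast <;> exact h r hr

lemma spin_fst_ne (hq : q ∈ pathsBspin n ε l) {r : ℕ} (hr : r < n) :
    (pt q r).1 ≠ 2 * n - 1 := by
  rw [spin_fst hq hr]
  intro h
  have : ((if l % 4 = 3 then 2 * r else 4 * n - 2 - 2 * r : ℤ) : ℝ) = ((2 * n - 1 : ℤ) : ℝ) := by
    rw [h]; push_cast; ring
  have := Int.cast_injective this
  split_ifs at this <;> omega

lemma spin_snd_eq (hq : q ∈ pathsBspin n ε l) {r : ℕ} (hr : r ≤ n - 1) :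
    ∃ m : ℤ, (pt q r).2 = l + 2 * n - 1 + 2 * m ∧ (m - r) % 2 = 0 := by
  induction r with
  | zero => exact ⟨0, by rw [hq.2.2.2.1]; ring, by simp⟩
  | succ r ih =>
    obtain ⟨m, hm, hpar⟩ := ih (by omega)
    rcases hq.2.2.2.2.1 r (by omega) with h | h
    · exact ⟨m + 1, by push_cast; linarith, by push_cast; omega⟩
    · exact ⟨m - 1, by push_cast; linarith, by push_cast; omega⟩

lemma spin_eq_last_of_mem (hq : q ∈ pathsBspin n ε l) {v : ℝ} (hv : ((2 * n - 1 : ℝ), v) ∈ q) :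
    v = (pt q n).2 := by
  obtain ⟨r, hr, hqr⟩ := exists_pt_eq_of_mem hv
  rw [spin_length hq] at hr
  obtain rfl : r = n := by
    by_contra h
    exact spin_fst_ne hq (r := r) (by omega) (by rw [hqr])
  rw [hqr]

lemma spin_last_mem (hq : q ∈ pathsBspin n ε l) : ((2 * n - 1 : ℝ), (pt q n).2) ∈ q := by
  rw [← spin_fst_last hq]; exact pt_mem (by rw [spin_length hq]; omega)

lemma spin_ext (hq : q ∈ pathsBspin n ε l) (hq' : q' ∈ pathsBspin n ε l) (up : Bool)
    (h : ∀ r ≤ n, height up q r = height up q' r) : q = q' := by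
  refine ext_pt (by rw [spin_length hq, spin_length hq']) fun r hr => ?_
  rw [spin_length hq] at hr
  refine Prod.ext ?_ (height_injective up (h r (by omega)))
  rcases Nat.lt_or_ge r n with hr' | hr'
  · rw [spin_fst hq hr', spin_fst hq' hr']
  · rw [show r = n by omega, spin_fst_last hq, spin_fst_last hq']

variable (up : Bool)

lemma spin_height_succ (hq : q ∈ pathsBspin n ε l) :
    ∀ r < n - 1, height up q (r + 1) = height up q r + 2 ∨
      height up q (r + 1) = height up q r - 2 := by
  intro r hr
  rcases hq.2.2.2.2.1 r (by omega) with h | h <;> cases up <;> simp only [height, signed] <;>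
    first | (left; simp; linarith) | (right; simp; linarith)

lemma spin_height_last (hq : q ∈ pathsBspin n ε l) :
    height up q n = height up q (n - 1) + (1 + ε) ∨
      height up q n = height up q (n - 1) - (1 + ε) := by
  rcases hq.2.2.2.2.2 with h | h <;> cases up <;> simp only [height, signed] <;>
    first | (left; simp; linarith) | (right; simp; linarith)

lemma spin_height_zero (hq : q ∈ pathsBspin n ε l) :
    height up q 0 = signed up (bottom up n l) + (2 * n - 1) := by
  cases up <;> simp [height, signed, bottom, hq.2.2.2.1] <;> ring

lemma signed_bottom_sub_le_height (hq : q ∈ pathsBspin n ε l) (hn : 1 ≤ n) (hε : 0 < ε) :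
    signed up (bottom up n l) - ε ≤ height up q n := by
  have h := abs_le.mp (abs_sub_le_of_steps (by norm_num) (spin_height_succ up hq)
    (Nat.zero_le (n - 1)) le_rfl)
  rw [spin_height_zero up hq] at h
  push_cast [Nat.cast_sub hn] at h
  rcases spin_height_last up hq with h' | h' <;> rw [h'] <;> linarith

lemma NoPeak.spin_straight (hq : q ∈ pathsBspin n ε l) (hn : 2 ≤ n) (hε : 0 < ε)
    (hy : NoPeak (height up q) n) (hlast : height up q n < height up q (n - 1)) :
    (∀ r ≤ n - 1, height up q r = height up q 0 - 2 * r) ∧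
      (pt q n).2 = bottom up n l - signed up ε := by
  have hne : ∀ r < n, height up q (r + 1) ≠ height up q r := fun r hr => by
    rcases Nat.lt_or_ge r (n - 1) with h | h
    · rcases spin_height_succ up hq r h with h' | h' <;> rw [h'] <;> linarith
    · rw [show r = n - 1 by omega, Nat.sub_add_cancel (by omega)]
      rcases spin_height_last up hq with h' | h' <;> rw [h'] <;> linarith
  have hdown : ∀ r < n - 1, height up q (r + 1) = height up q r - 2 := fun r hr =>
    (spin_height_succ up hq r hr).resolve_left fun h => by
      linarith [hy.succ_lt hne hlast (r := r) (by omega)]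
  have hstraight := fun r (hr : r ≤ n - 1) => eq_sub_of_forall_succ_eq hdown hr
  refine ⟨hstraight, (height_eq_signed_iff (up := up)).mp ?_⟩
  have hend : height up q n = height up q (n - 1) - (1 + ε) :=
    (spin_height_last up hq).resolve_left fun h => by linarith
  rw [hend, hstraight (n - 1) le_rfl, spin_height_zero up hq]
  push_cast [Nat.cast_sub (by omega : 1 ≤ n)]
  cases up <;> simp [signed] <;> ring

lemma spin_last_of_height_lt (hq : q ∈ pathsBspin n ε l) (hε : 0 < ε) (hl : l % 2 = 1)
    (hlast : height up q (n - 1) < height up q n) :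
    ∃ c : ℤ, c % 2 = 1 ∧ (pt q n).2 = c + signed up ε ∧
      height up q (n - 1) = signed up c - 1 := by
  obtain ⟨m, hm, -⟩ := spin_snd_eq hq (r := n - 1) le_rfl
  have hend : height up q n = height up q (n - 1) + (1 + ε) :=
    (spin_height_last up hq).resolve_right fun h => by linarith
  refine ⟨if up then l + 2 * n - 2 + 2 * m else l + 2 * n + 2 * m, by split_ifs <;> omega,
    (height_eq_signed_iff (up := up)).mp ?_, ?_⟩ <;>
  · simp only [height] at hend ⊢
    cases up <;> simp only [signed, hm, Bool.false_eq_true, if_false, if_true] at hend ⊢ <;>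
      push_cast <;> linarith

end SpinPath

section Comb
variable {n i : ℕ} {ε : ℝ} {k : ℤ} {p a b : List (ℝ × ℝ)}
  (ha : a ∈ pathsBspin n ε (k - (2 * n - 2 * i - 1)))
  (hb : b ∈ pathsBspin n ε (k + (2 * n - 2 * i - 1))) (hab : p = a ++ b.reverse)
include ha hb hab

lemma comb_length : p.length = 2 * n + 2 := by
  rw [hab, List.length_append, List.length_reverse, spin_length ha, spin_length hb]; ring

lemma comb_pt_left {r : ℕ} (hr : r ≤ n) : pt p r = pt a r := by
  have h₁ : r < a.length := by rw [spin_length ha]; omega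
  have h₂ : r < p.length := by rw [comb_length ha hb hab]; omega
  rw [pt_eq_getElem h₁, pt_eq_getElem h₂]
  simp only [hab, List.getElem_append_left h₁]

lemma comb_pt_right {u : ℕ} (hu : u ≤ n) : pt p (2 * n + 1 - u) = pt b u := by
  have h₁ : u < b.length := by rw [spin_length hb]; omega
  have h₂ : 2 * n + 1 - u < p.length := by rw [comb_length ha hb hab]; omega
  rw [pt_eq_getElem h₁, pt_eq_getElem h₂]
  simp only [hab]
  rw [List.getElem_append_right (by rw [spin_length ha]; omega), List.getElem_reverse]
  congr 1
  rw [spin_length ha, spin_length hb]; omega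

lemma comb_mem_iff {v : ℝ} :
    ((2 * n - 1 : ℝ), v) ∈ p ↔ v = (pt a n).2 ∨ v = (pt b n).2 := by
  rw [hab, List.mem_append, List.mem_reverse]
  constructor
  · rintro (h | h)
    exacts [.inl (spin_eq_last_of_mem ha h), .inr (spin_eq_last_of_mem hb h)]
  · rintro (rfl | rfl)
    exacts [.inl (spin_last_mem ha), .inr (spin_last_mem hb)]

/-- The two halves of `p` run in opposite directions, so `p` meets every vertical line other
than `x = 2N - 1` at most once. -/
lemma comb_fst_injOn (hk : k % 2 = 0) {r r' : ℕ} (hr : r < 2 * n + 2) (hr' : r' < 2 * n + 2)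
    (heq : (pt p r).1 = (pt p r').1) (hne : (pt p r).1 ≠ 2 * n - 1) : r = r' := by
  have hfst : ∀ r < 2 * n + 2, (pt p r).1 ≠ 2 * n - 1 →
      (r < n ∧ (pt p r).1 = ((if (k - (2 * n - 2 * i - 1)) % 4 = 3 then 2 * (r : ℤ)
        else 4 * n - 2 - 2 * r : ℤ) : ℝ)) ∨
      (n + 2 ≤ r ∧ (pt p r).1 = ((if (k + (2 * n - 2 * i - 1)) % 4 = 3
        then 2 * ((2 * n + 1 - r : ℕ) : ℤ)
        else 4 * n - 2 - 2 * ((2 * n + 1 - r : ℕ) : ℤ) : ℤ) : ℝ)) := by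
    intro r hr hne
    rcases Nat.lt_or_ge r n with h | h
    · exact .inl ⟨h, by rw [comb_pt_left ha hb hab h.le, spin_fst ha h]⟩
    have hrn : r ≠ n := fun hrn => hne (by rw [hrn, comb_pt_left ha hb hab le_rfl,
      spin_fst_last ha])
    have hrn' : r ≠ n + 1 := fun hrn => hne (by
      rw [hrn, show n + 1 = 2 * n + 1 - n by omega, comb_pt_right ha hb hab le_rfl,
        spin_fst_last hb])
    have := comb_pt_right ha hb hab (u := 2 * n + 1 - r) (by omega)
    rw [Nat.sub_sub_self (by omega)] at this
    exact .inr ⟨by omega, by rw [this, spin_fst hb (by omega)]⟩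
  rcases hfst r hr hne with ⟨h₁, hx⟩ | ⟨h₁, hx⟩ <;>
    rcases hfst r' hr' (heq ▸ hne) with ⟨h₂, hx'⟩ | ⟨h₂, hx'⟩ <;>
    rw [hx, hx'] at heq <;> have := Int.cast_injective heq <;> split_ifs at this <;> omega

end Comb

section Corners
variable {n : ℕ} {ε : ℝ} {p : List (ℝ × ℝ)}

lemma mem_Cp_B_N_iff {up : Bool} {c : ℤ} :
    (n, c) ∈ Cp (.B n ε) p up ↔ c % 2 = 1 ∧ ((2 * n - 1 : ℝ), c + signed up ε) ∈ p ∧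
      ((2 * n - 1 : ℝ), c - signed up ε) ∉ p := by
  have hι : (iotaB n (n, c)).1 = 2 * n - 1 := by simp [iotaB]
  simp only [Cp, Set.mem_ofPred_eq, XB, hι, ne_eq, not_true_eq_false, false_and, and_false,
    exists_false, false_or, true_and, lt_irrefl, and_false, or_false]
  cases up <;> simp [signed, sub_eq_add_neg]

lemma exists_pt_of_mem_Cp_B {up : Bool} {x : ℕ × ℤ} (hx : x ∈ Cp (.B n ε) p up) (hxn : x.1 ≠ n) :
    ∃ r, 1 ≤ r ∧ r + 1 < p.length ∧ pt p r = (((iotaB n x).1 : ℝ), ((iotaB n x).2 : ℝ)) ∧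
      (iotaB n x).1 ≠ 2 * n - 1 ∧ height up p (r - 1) < height up p r ∧
      height up p (r + 1) < height up p r := by
  obtain ⟨-, ⟨r, h₁, h₂, h₃, -, h₅, -, h₇⟩ | ⟨h, -⟩⟩ := hx
  · refine ⟨r, h₁, h₂, h₃, h₅, ?_⟩
    cases up <;> simpa [height, signed] using h₇
  · exact absurd h hxn

lemma exists_mem_Cp_B_of_peak (hn : 2 ≤ n) {l : ℤ} {q : List (ℝ × ℝ)}
    (hq : q ∈ pathsBspin n ε l) (hl : l % 2 = 1) {u r : ℕ} (hu : 1 ≤ u) (hun : u < n)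
    (hr : 1 ≤ r) (hr' : r + 1 < p.length) (hpt : pt p r = pt q u) {up : Bool}
    (hpeak : height up p (r - 1) < height up p r ∧ height up p (r + 1) < height up p r) :
    ∃ v, (u, v) ∈ Cp (.B n ε) p up := by
  obtain ⟨m, hm, hpar⟩ := spin_snd_eq hq (r := u) (by omega)
  have hι : iotaB n (u, l + 2 * n - 1 + 2 * m) =
      (if l % 4 = 3 then 2 * (u : ℤ) else 4 * n - 2 - 2 * u, l + 2 * n - 1 + 2 * m) := by
    simp only [iotaB, if_neg (show u ≠ n by omega)]
    split_ifs <;> first | rfl | omega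
  refine ⟨l + 2 * n - 1 + 2 * m, Or.inr ⟨hu, hun, by omega⟩, Or.inl ⟨r, hr, hr', ?_, ?_⟩⟩
  · rw [hpt, hι]
    exact Prod.ext (spin_fst hq hun) (by rw [hm]; push_cast; ring)
  · rw [hι]
    refine ⟨by split_ifs <;> omega, by split_ifs <;> omega, by split_ifs <;> omega, ?_⟩
    cases up <;> simpa [height, signed] using hpeak

lemma noPeak_of_spin (hn : 2 ≤ n) {k : ℤ} (hp : p ∈ pathsBspin n ε k) (hk : k % 2 = 1)
    {up : Bool} (hC : ∀ x ∈ Cp (.B n ε) p up, x.1 = n) : NoPeak (height up p) n := by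
  intro u hu hun hpeak
  obtain ⟨v, hv⟩ := exists_mem_Cp_B_of_peak hn hp hk hu hun hu
    (by rw [spin_length hp]; omega) rfl hpeak
  exact absurd (hC _ hv) (by simp; omega)

variable {i : ℕ} {k : ℤ} {a b : List (ℝ × ℝ)}
  (ha : a ∈ pathsBspin n ε (k - (2 * n - 2 * i - 1)))
  (hb : b ∈ pathsBspin n ε (k + (2 * n - 2 * i - 1))) (hab : p = a ++ b.reverse)
include ha hb hab

lemma comb_noPeak_left (hn : 2 ≤ n) (hk : k % 2 = 0) {up : Bool}
    (hC : ∀ x ∈ Cp (.B n ε) p up, x.1 = n) : NoPeak (height up a) n := by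
  intro u hu hun hpeak
  have hh : ∀ r ≤ n, height up p r = height up a r := fun r hr => by
    rw [height, height, comb_pt_left ha hb hab hr]
  obtain ⟨v, hv⟩ := exists_mem_Cp_B_of_peak hn ha (by omega) hu hun hu
    (by rw [comb_length ha hb hab]; omega) (comb_pt_left ha hb hab hun.le)
    (by rwa [hh _ (by omega), hh _ (by omega), hh _ (by omega)])
  exact absurd (hC _ hv) (by simp; omega)

lemma comb_noPeak_right (hn : 2 ≤ n) (hk : k % 2 = 0) {up : Bool}
    (hC : ∀ x ∈ Cp (.B n ε) p up, x.1 = n) : NoPeak (height up b) n := by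
  intro u hu hun hpeak
  have hh : ∀ r ≤ n, height up p (2 * n + 1 - r) = height up b r := fun r hr => by
    rw [height, height, comb_pt_right ha hb hab hr]
  obtain ⟨v, hv⟩ := exists_mem_Cp_B_of_peak hn hb (by omega) hu hun (r := 2 * n + 1 - u)
    (by omega) (by rw [comb_length ha hb hab]; omega) (comb_pt_right ha hb hab hun.le)
    (by rw [show 2 * n + 1 - u - 1 = 2 * n + 1 - (u + 1) by omega,
      show 2 * n + 1 - u + 1 = 2 * n + 1 - (u - 1) by omega, hh _ (by omega), hh _ (by omega),
      hh _ (by omega)]; exact hpeak.symm)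
  exact absurd (hC _ hv) (by simp; omega)

end Corners

section Ends
variable {n : ℕ} {ε : ℝ} {up : Bool} {l : ℤ} {q q' : List (ℝ × ℝ)}

lemma spin_height_ne (hq : q ∈ pathsBspin n ε l) (hε : 0 < ε) :
    height up q n ≠ height up q (n - 1) := by
  rcases spin_height_last up hq with h | h <;> rw [h] <;> linarith

lemma spin_signed_le (hq : q ∈ pathsBspin n ε l) (hn : 1 ≤ n) (hε : 0 < ε) {v : ℝ}
    (hv : ((2 * n - 1 : ℝ), v) ∈ q) : signed up (bottom up n l) - ε ≤ signed up v := by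
  rw [spin_eq_last_of_mem hq hv]; exact signed_bottom_sub_le_height up hq hn hε

lemma NoPeak.eq_bottom (hq : q ∈ pathsBspin n ε l) (hn : 2 ≤ n) (hε : 0 < ε ∧ ε < 1 / 2)
    (hl : l % 2 = 1) (hy : NoPeak (height up q) n) {c : ℤ}
    (hc : (pt q n).2 = c - signed up ε) : c = bottom up n l := by
  rcases lt_or_gt_of_ne (spin_height_ne (up := up) hq hε.1) with h | h
  · have := (hy.spin_straight up hq hn hε.1 h).2
    rw [hc] at this
    exact_mod_cast (sub_left_inj.mp this)
  · obtain ⟨c', -, hc', -⟩ := spin_last_of_height_lt up hq hε.1 hl h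
    rw [hc] at hc'
    cases up <;> simp only [signed, Bool.false_eq_true, if_false, if_true] at hc'
    · exact absurd hc'.symm (int_add_ne_int_sub hε)
    · exact absurd (by linarith) (int_add_ne_int_sub hε (c := c) (c' := c'))

lemma spin_height_lt_of_forall_not_mem_Cp (hq : q ∈ pathsBspin n ε l) (hε : 0 < ε)
    (hl : l % 2 = 1) (hC : ∀ c : ℤ, (n, c) ∉ Cp (.B n ε) q up) :
    height up q n < height up q (n - 1) := by
  refine (lt_or_gt_of_ne (spin_height_ne hq hε)).resolve_right fun h => ?_
  obtain ⟨c, hc, hend, -⟩ := spin_last_of_height_lt up hq hε hl h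
  refine hC c (mem_Cp_B_N_iff.mpr ⟨hc, hend ▸ spin_last_mem hq, fun hmem => ?_⟩)
  have := (spin_eq_last_of_mem hq hmem).trans hend
  cases up <;> simp only [signed, Bool.false_eq_true, if_false, if_true] at this <;> linarith

lemma spin_eq_of_noPeak (hq : q ∈ pathsBspin n ε l) (hq' : q' ∈ pathsBspin n ε l) (hn : 1 ≤ n)
    (hy : NoPeak (height up q) n) (hy' : NoPeak (height up q') n)
    (hpen : height up q (n - 1) = height up q' (n - 1)) (hend : (pt q n).2 = (pt q' n).2) :
    q = q' := by
  refine spin_ext hq hq' up fun r hr => ?_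
  rcases Nat.lt_or_ge r n with h | h
  · rw [(hy.mono (Nat.sub_le n 1)).eq_max two_pos (spin_height_succ up hq) (by omega),
      (hy'.mono (Nat.sub_le n 1)).eq_max two_pos (spin_height_succ up hq') (by omega),
      spin_height_zero up hq, spin_height_zero up hq', hpen]
  · rw [show r = n by omega, height, height, hend]

lemma spin_eq_of_height_lt (hq : q ∈ pathsBspin n ε l) (hq' : q' ∈ pathsBspin n ε l)
    (hn : 2 ≤ n) (hε : 0 < ε) (hy : NoPeak (height up q) n) (hy' : NoPeak (height up q') n)
    (h : height up q n < height up q (n - 1)) (h' : height up q' n < height up q' (n - 1)) :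
    q = q' := by
  obtain ⟨hs, he⟩ := hy.spin_straight up hq hn hε h
  obtain ⟨hs', he'⟩ := hy'.spin_straight up hq' hn hε h'
  refine spin_eq_of_noPeak hq hq' (by omega) hy hy' ?_ (he.trans he'.symm)
  rw [hs _ le_rfl, hs' _ le_rfl, spin_height_zero up hq, spin_height_zero up hq']

end Ends

/-- `p` meets the line `x = 2N - 1` exactly at the end points of the spin paths `lo` and `hi`;
in `height up` the end of `lo` lies below the one of `hi`, but `hi` could reach lower. -/
def IsSplit (n : ℕ) (ε : ℝ) (up : Bool) (p lo hi : List (ℝ × ℝ)) (ℓlo ℓhi : ℤ) : Prop :=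
  lo ∈ pathsBspin n ε ℓlo ∧ hi ∈ pathsBspin n ε ℓhi ∧ ℓlo % 2 = 1 ∧ ℓhi % 2 = 1 ∧
    signed up (bottom up n ℓhi) < signed up (bottom up n ℓlo) ∧
    signed up (pt lo n).2 < signed up (pt hi n).2 ∧
    ∀ v, ((2 * n - 1 : ℝ), v) ∈ p ↔ v = (pt lo n).2 ∨ v = (pt hi n).2

section IsSplit
variable {n : ℕ} {ε : ℝ} {up : Bool} {p lo hi : List (ℝ × ℝ)} {ℓlo ℓhi : ℤ}
  (hs : IsSplit n ε up p lo hi ℓlo ℓhi)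
include hs

lemma IsSplit.signed_le (hn : 1 ≤ n) (hε : 0 < ε) {v : ℝ} (hv : ((2 * n - 1 : ℝ), v) ∈ p) :
    signed up (bottom up n ℓlo) - ε ≤ signed up v := by
  have hlo := signed_bottom_sub_le_height up hs.1 hn hε
  rcases (hs.2.2.2.2.2.2 v).mp hv with rfl | rfl
  · exact hlo
  · exact hlo.trans hs.2.2.2.2.2.1.le

lemma IsSplit.eq_bottom (hn : 2 ≤ n) (hε : 0 < ε ∧ ε < 1 / 2)
    (hylo : NoPeak (height up lo) n) (hyhi : NoPeak (height up hi) n) {c : ℤ}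
    (hc : ((2 * n - 1 : ℝ), c - signed up ε) ∈ p) : c = bottom up n ℓlo := by
  obtain ⟨hlo, hhi, hℓlo, hℓhi, hbot, hend, hmem⟩ := hs
  rcases (hmem _).mp hc with h | h
  · exact hylo.eq_bottom hlo hn hε hℓlo h.symm
  · have hfl := signed_bottom_sub_le_height up hlo (by omega) hε.1
    have := hyhi.eq_bottom hhi hn hε hℓhi h.symm
    subst this
    simp only [height, ← h] at hend hfl
    cases up <;> simp only [signed, Bool.false_eq_true, if_false, if_true] at * <;> linarith

lemma IsSplit.height_lo_lt (hε : 0 < ε) (hC : ∀ c : ℤ, (n, c) ∉ Cp (.B n ε) p up) :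
    height up lo n < height up lo (n - 1) := by
  obtain ⟨hlo, hhi, hℓlo, hℓhi, hbot, hend, hmem⟩ := hs
  refine (lt_or_gt_of_ne (spin_height_ne hlo hε)).resolve_right fun h => ?_
  obtain ⟨c, hc, hcend, -⟩ := spin_last_of_height_lt up hlo hε hℓlo h
  refine hC c (mem_Cp_B_N_iff.mpr ⟨hc, (hmem _).mpr (.inl hcend.symm), fun hmem' => ?_⟩)
  rcases (hmem _).mp hmem' with h' | h'
  · rw [hcend] at h'
    cases up <;> simp only [signed, Bool.false_eq_true, if_false, if_true] at h' <;> linarith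
  · rw [← h', hcend] at hend
    cases up <;> simp only [signed, Bool.false_eq_true, if_false, if_true] at hend <;> linarith

variable (hn : 2 ≤ n) (hε : 0 < ε ∧ ε < 1 / 2) (hylo : NoPeak (height up lo) n)
  (hyhi : NoPeak (height up hi) n) (hC : ∀ c : ℤ, (n, c) ∉ Cp (.B n ε) p up)
include hn hε hylo hyhi hC

lemma IsSplit.hi_eq :
    height up hi (n - 1) = signed up (bottom up n ℓlo) - 1 ∧
      (pt hi n).2 = bottom up n ℓlo + signed up ε := by
  have hlo_end := (hylo.spin_straight up hs.1 hn hε.1 (hs.height_lo_lt hε.1 hC)).2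
  obtain ⟨hlo, hhi, hℓlo, hℓhi, hbot, hend, hmem⟩ := hs
  have hup : height up hi (n - 1) < height up hi n := by
    refine (lt_or_gt_of_ne (spin_height_ne hhi hε.1)).resolve_left fun h => ?_
    have := (hyhi.spin_straight up hhi hn hε.1 h).2
    rw [this, hlo_end] at hend
    cases up <;> simp only [signed, Bool.false_eq_true, if_false, if_true] at * <;> linarith
  obtain ⟨c, hc, hcend, hpen⟩ := spin_last_of_height_lt up hhi hε.1 hℓhi hup
  by_contra hne
  refine hC c (mem_Cp_B_N_iff.mpr ⟨hc, (hmem _).mpr (.inr hcend.symm), fun hmem' => ?_⟩)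
  rcases (hmem _).mp hmem' with h' | h'
  · rw [hlo_end] at h'
    have : c = bottom up n ℓlo := by
      cases up <;> simp only [signed, Bool.false_eq_true, if_false, if_true] at h' <;>
        exact_mod_cast (by linarith : (c : ℝ) = bottom _ n ℓlo)
    subst this
    exact hne ⟨hpen, hcend⟩
  · rw [hcend] at h'
    cases up <;> simp only [signed, Bool.false_eq_true, if_false, if_true] at h' <;> linarith

end IsSplit

/-- The lowest end point, in `height up`, of a path of `𝒫_{i,k}` is
`(2N - 1, level N i k up - signed up ε)`, the end of the straight half of the extremal path. -/
def level (n i : ℕ) (k : ℤ) (up : Bool) : ℤ :=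
  bottom up n (if i = n then k
    else bif up then k - (2 * n - 2 * i - 1) else k + (2 * n - 2 * i - 1))

section PathsB
variable {n i : ℕ} {ε : ℝ} {k : ℤ} {p q : List (ℝ × ℝ)}

lemma pathsB_cases (hp : p ∈ pathsB n ε i k) (hik : (i, k) ∈ XB n) :
    (i = n ∧ k % 2 = 1 ∧ p ∈ pathsBspin n ε k) ∨
      (i < n ∧ k % 2 = 0 ∧ ∃ a b, a ∈ pathsBspin n ε (k - (2 * n - 2 * i - 1)) ∧
        b ∈ pathsBspin n ε (k + (2 * n - 2 * i - 1)) ∧ p = a ++ b.reverse ∧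
        0 < (pt a n).2 - (pt b n).2) := by
  rcases hik with ⟨rfl, hk⟩ | ⟨-, hi, hk⟩
  · rw [pathsB, if_pos rfl] at hp
    exact .inl ⟨rfl, hk, hp⟩
  · rw [pathsB, if_neg hi.ne] at hp
    obtain ⟨a, b, ha, hb, hab, -, hvab⟩ := hp
    exact .inr ⟨hi, hk, a, b, ha, hb, hab, hvab⟩

lemma comb_isSplit {a b : List (ℝ × ℝ)} (ha : a ∈ pathsBspin n ε (k - (2 * n - 2 * i - 1)))
    (hb : b ∈ pathsBspin n ε (k + (2 * n - 2 * i - 1))) (hab : p = a ++ b.reverse)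
    (hvab : 0 < (pt a n).2 - (pt b n).2) (hi : i < n) (hk : k % 2 = 0) (up : Bool) :
    IsSplit n ε up p (bif up then a else b) (bif up then b else a)
      (bif up then k - (2 * n - 2 * i - 1) else k + (2 * n - 2 * i - 1))
      (bif up then k + (2 * n - 2 * i - 1) else k - (2 * n - 2 * i - 1)) := by
  have hmem := fun v => comb_mem_iff ha hb hab (v := v)
  cases up <;> simp only [cond_false, cond_true]
  · refine ⟨hb, ha, by omega, by omega, ?_, ?_, fun v => (hmem v).trans or_comm⟩ <;>
      simp only [signed, bottom, Bool.false_eq_true, if_false]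
    · exact_mod_cast (by omega : k - (2 * n - 2 * i - 1) < k + (2 * n - 2 * i - 1))
    · linarith
  · refine ⟨ha, hb, by omega, by omega, ?_, ?_, hmem⟩ <;>
      simp only [signed, bottom, if_true, neg_lt_neg_iff]
    · exact_mod_cast (by omega : k - (2 * n - 2 * i - 1) + 4 * n - 2 <
        k + (2 * n - 2 * i - 1) + 4 * n - 2)
    · linarith

lemma level_of_lt (hi : i < n) (up : Bool) :
    level n i k up =
      bottom up n (bif up then k - (2 * n - 2 * i - 1) else k + (2 * n - 2 * i - 1)) := by
  rw [level, if_neg hi.ne]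

lemma pathsB_fst_injOn (hp : p ∈ pathsB n ε i k) (hik : (i, k) ∈ XB n) {r r' : ℕ}
    (hr : r < p.length) (hr' : r' < p.length) (heq : (pt p r).1 = (pt p r').1)
    (hne : (pt p r).1 ≠ 2 * n - 1) : r = r' := by
  rcases pathsB_cases hp hik with ⟨-, -, hp⟩ | ⟨-, hk, a, b, ha, hb, hab, -⟩
  · rw [spin_length hp] at hr hr'
    have h₁ : r ≠ n := by rintro rfl; exact hne (spin_fst_last hp)
    have h₂ : r' ≠ n := by rintro rfl; exact hne (heq.trans (spin_fst_last hp))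
    rw [spin_fst hp (by omega), spin_fst hp (by omega)] at heq
    have := Int.cast_injective heq
    split_ifs at this <;> omega
  · rw [comb_length ha hb hab] at hr hr'
    exact comb_fst_injOn ha hb hab hk hr hr' heq hne

variable (hn : 2 ≤ n) (hε : 0 < ε ∧ ε < 1 / 2) (hp : p ∈ pathsB n ε i k)
  (hik : (i, k) ∈ XB n) {up : Bool}
include hn hε hp hik

lemma pathsB_signed_le {v : ℝ} (hv : ((2 * n - 1 : ℝ), v) ∈ p) :
    signed up (level n i k up) - ε ≤ signed up v := by
  rcases pathsB_cases hp hik with ⟨rfl, -, hp⟩ | ⟨hi, hk, a, b, ha, hb, hab, hvab⟩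
  · rw [level, if_pos rfl]; exact spin_signed_le hp (by omega) hε.1 hv
  · rw [level_of_lt hi]
    exact (comb_isSplit ha hb hab hvab hi hk up).signed_le (by omega) hε.1 hv

/-- Among the points of `p` on the line `x = 2N - 1`, only the end point of a straight half can be
of the form `c - signed up ε`. -/
lemma pathsB_eq_level (hC : ∀ x ∈ Cp (.B n ε) p up, x.1 = n) {c : ℤ}
    (hc : ((2 * n - 1 : ℝ), c - signed up ε) ∈ p) : c = level n i k up := by
  rcases pathsB_cases hp hik with ⟨rfl, hk, hp⟩ | ⟨hi, hk, a, b, ha, hb, hab, hvab⟩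
  · rw [level, if_pos rfl]
    exact (noPeak_of_spin hn hp hk hC).eq_bottom hp hn hε hk (spin_eq_last_of_mem hp hc).symm
  · rw [level_of_lt hi]
    have hya := comb_noPeak_left ha hb hab hn hk hC
    have hyb := comb_noPeak_right ha hb hab hn hk hC
    exact (comb_isSplit ha hb hab hvab hi hk up).eq_bottom hn hε
      (by cases up <;> assumption) (by cases up <;> assumption) hc

lemma pathsB_eq_of_Cp_eq_empty (hq : q ∈ pathsB n ε i k) (hCp : Cp (.B n ε) p up = ∅)
    (hCq : Cp (.B n ε) q up = ∅) : p = q := by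
  have hC : ∀ {p}, Cp (.B n ε) p up = ∅ → ∀ x ∈ Cp (.B n ε) p up, x.1 = n := by
    intro p h x hx; simp [h] at hx
  have hN : ∀ {p}, Cp (.B n ε) p up = ∅ → ∀ c : ℤ, (n, c) ∉ Cp (.B n ε) p up := by
    intro p h c; simp [h]
  rcases pathsB_cases hp hik with ⟨rfl, hk, hp'⟩ | ⟨hi, hk, a, b, ha, hb, hab, hvab⟩
  · obtain ⟨-, -, hq'⟩ := (pathsB_cases hq hik).resolve_right (by omega)
    exact spin_eq_of_height_lt hp' hq' hn hε.1 (noPeak_of_spin hn hp' hk (hC hCp))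
      (noPeak_of_spin hn hq' hk (hC hCq))
      (spin_height_lt_of_forall_not_mem_Cp hp' hε.1 hk (hN hCp))
      (spin_height_lt_of_forall_not_mem_Cp hq' hε.1 hk (hN hCq))
  obtain ⟨-, -, a', b', ha', hb', hab', hvab'⟩ := (pathsB_cases hq hik).resolve_left (by omega)
  have hs := comb_isSplit ha hb hab hvab hi hk up
  have hs' := comb_isSplit ha' hb' hab' hvab' hi hk up
  have hya := comb_noPeak_left ha hb hab hn hk (hC hCp)
  have hyb := comb_noPeak_right ha hb hab hn hk (hC hCp)
  have hya' := comb_noPeak_left ha' hb' hab' hn hk (hC hCq)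
  have hyb' := comb_noPeak_right ha' hb' hab' hn hk (hC hCq)
  have hlo : (bif up then a else b) = (bif up then a' else b') := by
    refine spin_eq_of_height_lt hs.1 hs'.1 hn hε.1 ?_ ?_
      (hs.height_lo_lt hε.1 (hN hCp)) (hs'.height_lo_lt hε.1 (hN hCq)) <;>
      cases up <;> assumption
  have hhi : (bif up then b else a) = (bif up then b' else a') := by
    have h := hs.hi_eq hn hε (by cases up <;> assumption) (by cases up <;> assumption) (hN hCp)
    have h' := hs'.hi_eq hn hε (by cases up <;> assumption) (by cases up <;> assumption) (hN hCq)
    refine spin_eq_of_noPeak hs.2.1 hs'.2.1 (by omega) ?_ ?_ (h.1.trans h'.1.symm)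
      (h.2.trans h'.2.symm) <;> cases up <;> assumption
  rw [hab, hab']
  cases up <;> simp only [cond_true, cond_false] at hlo hhi <;> rw [hlo, hhi]

end PathsB

/-! ### Type `B`: tuples along a snake -/

lemma level_lt_of_snakePos {n : ℕ} {ε : ℝ} {x y : ℕ × ℤ} (h : SnakePos (.B n ε) x y)
    (up : Bool) : level n x.1 x.2 up < level n y.1 y.2 up := by
  simp only [SnakePos] at h
  rcases abs_cases ((y.1 : ℤ) - x.1) with ⟨habs, hsgn⟩ | ⟨habs, hsgn⟩ <;> rw [habs] at h <;>
    cases up <;> simp only [level, bottom, cond_false, cond_true, Bool.false_eq_true,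
      if_false, if_true] <;> split_ifs at h ⊢ <;> omega

lemma IsSnake.level_lt {n : ℕ} {ε : ℝ} {T : ℕ} {w : Fin T → ℕ × ℤ} (hw : IsSnake (.B n ε) w)
    {s t : Fin T} (hst : s < t) (up : Bool) :
    level n (w s).1 (w s).2 up < level n (w t).1 (w t).2 up := by
  suffices ∀ d (t : Fin T), (t : ℕ) = s + 1 + d →
      level n (w s).1 (w s).2 up < level n (w t).1 (w t).2 up from
    this (t - s - 1) t (by have : (s : ℕ) < t := hst; omega)
  intro d
  induction d with
  | zero =>
    rintro ⟨t, ht⟩ rfl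
    exact level_lt_of_snakePos (hw.2 s ht) up
  | succ d ih =>
    rintro ⟨t, ht⟩ rfl
    exact (ih ⟨s + 1 + d, by omega⟩ rfl).trans (level_lt_of_snakePos (hw.2 _ ht) up)

lemma signed_not (up : Bool) (v : ℝ) : signed (!up) v = -signed up v := by
  cases up <;> simp [signed]

section TupleB
variable {n : ℕ} {ε : ℝ} {T : ℕ} {w : Fin T → ℕ × ℤ} {ps : Fin T → List (ℝ × ℝ)} {up : Bool}

/-- Corners of kind `up` away from the column `x = 2N - 1` cannot be cancelled: the cancelling
corner would be the same point of the same path, a local maximum and minimum at once. -/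
lemma fst_eq_of_mem_Cp_B (hw : ∀ t, w t ∈ X (.B n ε)) (hps : ps ∈ PBar (.B n ε) w)
    (hC : CornersCancel (.B n ε) ps up) {t : Fin T} {x : ℕ × ℤ}
    (hx : x ∈ Cp (.B n ε) (ps t) up) : x.1 = n := by
  by_contra hxn
  obtain ⟨s, hs⟩ := hC x t hx
  obtain ⟨r, hr₁, hr₂, hpt, hι, hl, hr⟩ := exists_pt_of_mem_Cp_B hx hxn
  obtain ⟨r', -, hr₂', hpt', -, hl', hr'⟩ := exists_pt_of_mem_Cp_B hs hxn
  obtain rfl := hps.2.eq_of_mem (hpt' ▸ pt_mem (by omega)) (hpt ▸ pt_mem (by omega))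
  have hne : (pt (ps s) r).1 ≠ 2 * n - 1 := by
    rw [hpt]; dsimp only; exact_mod_cast hι
  obtain rfl := pathsB_fst_injOn (hps.1 s) (hw s) (r := r) (r' := r') (by omega) (by omega)
    (by rw [hpt, hpt']) hne
  simp only [height, signed_not] at hl hl'
  linarith

/-- A corner of kind `up` at `(N, c)` of `p_t` can only be cancelled by a path `p_s` through
`(2N - 1, c - signed up ε)`. This forces `c` to be the level of `p_s`, while `p_t` passes through
`(2N - 1, c + signed up ε)`, so `c` is at least the level of `p_t` in the signed order; the
orientation given by non-overlapping and the growth of levels along the snake contradict this. -/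
lemma Cp_B_eq_empty_of_cornersCancel (hn : 2 ≤ n) (hε : 0 < ε ∧ ε < 1 / 2)
    (hw : IsSnake (.B n ε) w) (hps : ps ∈ PBar (.B n ε) w) (hC : CornersCancel (.B n ε) ps up)
    (t : Fin T) : Cp (.B n ε) (ps t) up = ∅ := by
  have hN := fun s x => fst_eq_of_mem_Cp_B hw.1 hps hC (t := s) (x := x)
  refine Set.eq_empty_of_forall_notMem fun ⟨j, c⟩ hx => ?_
  obtain rfl : n = j := (hN t _ hx).symm
  obtain ⟨s, hs⟩ := hC _ t hx
  rw [mem_Cp_B_N_iff] at hx hs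
  have hcs : ((2 * n - 1 : ℝ), c - signed up ε) ∈ ps s := by
    simpa [signed_not, sub_eq_add_neg] using hs.2.1
  have hst : s ≠ t := by rintro rfl; exact hx.2.2 hcs
  have hlev := pathsB_eq_level hn hε (hps.1 s) (hw.1 s) (hN s) hcs
  have hle := pathsB_signed_le hn hε (hps.1 t) (hw.1 t) (up := up) hx.2.1
  subst hlev
  cases up <;> simp only [signed, Bool.false_eq_true, if_false, if_true] at hle hcs hx
  · have := hw.level_lt (lt_of_le_of_ne (hps.2.le_of_mem hcs hx.2.1 (by linarith)) hst) false
    have := int_le_of_le_add hε.2 (by linarith :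
      (level n (w t).1 (w t).2 false : ℝ) ≤ level n (w s).1 (w s).2 false + 2 * ε)
    omega
  · have := hw.level_lt (lt_of_le_of_ne (hps.2.le_of_mem hx.2.1 hcs (by linarith)) hst.symm) true
    have := int_le_of_le_add hε.2 (by linarith :
      (level n (w s).1 (w s).2 true : ℝ) ≤ level n (w t).1 (w t).2 true + 2 * ε)
    omega

end TupleB

lemma Cp_eq_empty_of_cornersCancel {S : Setting} (hS : S.valid) {T : ℕ}
    {w : Fin T → ℕ × ℤ} (hw : IsSnake S w) {ps : Fin T → List (ℝ × ℝ)} (hps : ps ∈ PBar S w)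
    {up : Bool} (hC : CornersCancel S ps up) (t : Fin T) : Cp S (ps t) up = ∅ := by
  cases S with
  | A n => exact Cp_A_eq_empty_of_cornersCancel hps.2 hC t
  | B n ε => exact Cp_B_eq_empty_of_cornersCancel hS.1 hS.2 hw hps hC t

lemma eq_of_Cp_eq_empty {S : Setting} (hS : S.valid) {i : ℕ} {k : ℤ} (hik : (i, k) ∈ X S)
    {p q : List (ℝ × ℝ)} (hp : p ∈ P S i k) (hq : q ∈ P S i k) {up : Bool}
    (hCp : Cp S p up = ∅) (hCq : Cp S q up = ∅) : p = q := by
  cases S with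
  | A n => exact eq_of_Cp_A_eq_empty hp hq hCp hCq
  | B n ε => exact pathsB_eq_of_Cp_eq_empty hS.1 hS.2 hp hik hq hCp hCq

theorem stmt13_general (S : Setting) (hS : S.valid) {T : ℕ}
    (w : Fin T → ℕ × ℤ) (hw : IsSnake S w)
    (ps : Fin T → List (ℝ × ℝ)) (hps : ps ∈ PBar S w) :
    (ps ≠ (fun t => highestPath S (w t).1 (w t).2) → ¬ Dominant (tmon S ps)) ∧
    (ps ≠ (fun t => lowestPath S (w t).1 (w t).2) → ¬ AntiDominant (tmon S ps)) := by
  have key : ∀ up, CornersCancel S ps up →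
      ps = fun t => Classical.epsilon fun p => p ∈ P S (w t).1 (w t).2 ∧ Cp S p up = ∅ := by
    intro up hC
    funext t
    have hCt := Cp_eq_empty_of_cornersCancel hS hw hps hC t
    exact eq_epsilon_of_unique ⟨hps.1 t, hCt⟩ fun q ⟨hq, hCq⟩ =>
      eq_of_Cp_eq_empty hS (hw.1 t) hq (hps.1 t) hCq hCt
  exact ⟨fun hne hD => hne (key false (cornersCancel_false_of_dominant hD)),
    fun hne hD => hne (key true (cornersCancel_true_of_antiDominant hD))⟩

/-- if `(p_t) ∈ 𝒫̄` differs from the tuple of highest paths then `∏ m(p_t)` is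
not dominant, and if it differs from the tuple of lowest paths then `∏ m(p_t)` is not
anti-dominant. -/
theorem stmt13 (S : Setting) (hS : S.valid) {T : ℕ} (hT : 1 ≤ T)
    (w : Fin T → ℕ × ℤ) (hw : IsSnake S w)
    (ps : Fin T → List (ℝ × ℝ)) (hps : ps ∈ PBar S w) :
    (ps ≠ (fun t => highestPath S (w t).1 (w t).2) → ¬ Dominant (tmon S ps)) ∧
    (ps ≠ (fun t => lowestPath S (w t).1 (w t).2) → ¬ AntiDominant (tmon S ps)) :=
  stmt13_general S hS w hw ps hps

end Paper
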